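/- Let f : [0,1) → ℝ be Lebesgue integrable. Then for every j ∈ ℕ and every x ∈ [0,1), the Haar partial sum up to level j equals the dyadic average: ∫₀¹ f(t) dt + Σ_{l=0}^{j−1} Σ_{k=0}^{2^l−1} (∫₀¹ f ψ_{l,k}) * ψ_{l,k}(x) = 2^j ∫_{I_{j,⌊2^j x⌋}} f(t) dt. -/

import Mathlib

open MeasureTheory

/-- The dyadic interval `I_{l,k} = [k 2^{-l}, (k+1) 2^{-l})`. -/
def dyadicI (l k : ℕ) : Set ℝ := Set.Ico ((k : ℝ) / 2 ^ l) (((k : ℝ) + 1) / 2 ^ l)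

/-- The Haar wavelet `ψ_{l,k}(x) = 2^{l/2} (1_{[1/2,1)} - 1_{[0,1/2)})(2^l x - k)`. -/
noncomputable def haar (l k : ℕ) (x : ℝ) : ℝ :=
  2 ^ ((l : ℝ) / 2) *
    ((Set.Ico (1 / 2 : ℝ) 1).indicator 1 (2 ^ l * x - k) -
     (Set.Ico (0 : ℝ) (1 / 2 : ℝ)).indicator 1 (2 ^ l * x - k))

/-!
Write `E_l f (x) = 2^l ∫_{I_{l,⌊2^l x⌋}} f` for the level-`l` dyadic average, so `E_0 f = ∫₀¹ f`.
Since `ψ_{l,k} = 2^{l/2} (1_{I_{l+1,2k+1}} - 1_{I_{l+1,2k}})`, at a point `x ∈ I_{l,k}` only the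
`k`-th term of level `l` survives, and it equals `±2^l (∫_{I_{l+1,2k+1}} f - ∫_{I_{l+1,2k}} f)`
with the sign `+` exactly when `x` lies in the right half. Added to
`E_l f (x) = 2^l (∫_{I_{l+1,2k}} f + ∫_{I_{l+1,2k+1}} f)` it leaves `2^{l+1}` times the integral
over the half containing `x`, i.e. `E_{l+1} f (x)`; the theorem follows by induction on `j`.
-/

lemma two_rpow_half_mul_self (l : ℕ) : (2 : ℝ) ^ ((l : ℝ) / 2) * 2 ^ ((l : ℝ) / 2) = 2 ^ l := by
  rw [← Real.rpow_add two_pos, add_halves, Real.rpow_natCast]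

lemma mem_dyadicI_iff {l k : ℕ} {x : ℝ} :
    x ∈ dyadicI l k ↔ (2 : ℝ) ^ l * x - k ∈ Set.Ico (0 : ℝ) 1 := by
  have h : (0 : ℝ) < 2 ^ l := by positivity
  simp only [dyadicI, Set.mem_Ico, div_le_iff₀ h, lt_div_iff₀ h]
  constructor <;> rintro ⟨h₁, h₂⟩ <;> constructor <;> linarith

lemma mem_dyadicI_succ_two_mul_iff {l k : ℕ} {x : ℝ} :
    x ∈ dyadicI (l + 1) (2 * k) ↔ (2 : ℝ) ^ l * x - k ∈ Set.Ico (0 : ℝ) (1 / 2) := by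
  simp only [mem_dyadicI_iff, Set.mem_Ico, pow_succ]
  push_cast
  constructor <;> rintro ⟨h₁, h₂⟩ <;> constructor <;> linarith

lemma mem_dyadicI_succ_two_mul_add_one_iff {l k : ℕ} {x : ℝ} :
    x ∈ dyadicI (l + 1) (2 * k + 1) ↔ (2 : ℝ) ^ l * x - k ∈ Set.Ico (1 / 2 : ℝ) 1 := by
  simp only [mem_dyadicI_iff, Set.mem_Ico, pow_succ]
  push_cast
  constructor <;> rintro ⟨h₁, h₂⟩ <;> constructor <;> linarith

lemma measurableSet_dyadicI (l k : ℕ) : MeasurableSet (dyadicI l k) := measurableSet_Ico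

lemma dyadicI_eq_union (l k : ℕ) :
    dyadicI l k = dyadicI (l + 1) (2 * k) ∪ dyadicI (l + 1) (2 * k + 1) := by
  ext x
  simp only [Set.mem_union, mem_dyadicI_iff (k := k), mem_dyadicI_succ_two_mul_iff,
    mem_dyadicI_succ_two_mul_add_one_iff, Set.mem_Ico]
  constructor
  · rintro ⟨h₁, h₂⟩
    exact (lt_or_ge _ _).imp (⟨h₁, ·⟩) (⟨·, h₂⟩)
  · rintro (⟨h₁, h₂⟩ | ⟨h₁, h₂⟩) <;> constructor <;> linarith

lemma disjoint_dyadicI_succ (l k : ℕ) :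
    Disjoint (dyadicI (l + 1) (2 * k)) (dyadicI (l + 1) (2 * k + 1)) := by
  refine Set.disjoint_left.mpr fun x hL hR => ?_
  rw [mem_dyadicI_succ_two_mul_iff] at hL
  rw [mem_dyadicI_succ_two_mul_add_one_iff] at hR
  exact (lt_irrefl _) (hL.2.trans_le hR.1)

lemma dyadicI_subset_Ico {l k : ℕ} (hk : k < 2 ^ l) : dyadicI l k ⊆ Set.Ico (0 : ℝ) 1 := by
  have hk' : (k : ℝ) + 1 ≤ 2 ^ l := by exact_mod_cast hk
  intro x hx
  rw [dyadicI, Set.mem_Ico] at hx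
  constructor
  · exact le_trans (by positivity) hx.1
  · exact hx.2.trans_le ((div_le_one (by positivity)).mpr hk')

lemma floor_eq_of_mem_dyadicI {l k : ℕ} {x : ℝ} (hx : x ∈ dyadicI l k) :
    ⌊(2 : ℝ) ^ l * x⌋₊ = k := by
  rw [mem_dyadicI_iff, Set.mem_Ico] at hx
  rw [Nat.floor_eq_iff (by linarith [(k.cast_nonneg : (0 : ℝ) ≤ k)])]
  constructor <;> linarith

lemma mem_dyadicI_floor (l : ℕ) {x : ℝ} (hx : 0 ≤ x) : x ∈ dyadicI l ⌊(2 : ℝ) ^ l * x⌋₊ := by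
  have h : (0 : ℝ) ≤ 2 ^ l * x := by positivity
  rw [mem_dyadicI_iff, Set.mem_Ico]
  exact ⟨sub_nonneg.mpr (Nat.floor_le h), by linarith [Nat.lt_floor_add_one ((2 : ℝ) ^ l * x)]⟩

lemma floor_lt_two_pow (l : ℕ) {x : ℝ} (hx : x ∈ Set.Ico (0 : ℝ) 1) :
    ⌊(2 : ℝ) ^ l * x⌋₊ < 2 ^ l := by
  rw [Nat.floor_lt (by positivity [hx.1])]
  push_cast
  exact mul_lt_of_lt_one_right (by positivity) hx.2

lemma haar_eq (l k : ℕ) (x : ℝ) :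
    haar l k x = 2 ^ ((l : ℝ) / 2) * ((dyadicI (l + 1) (2 * k + 1)).indicator 1 x -
      (dyadicI (l + 1) (2 * k)).indicator 1 x) := by
  simp only [haar, Set.indicator, Pi.one_apply, mem_dyadicI_succ_two_mul_iff,
    mem_dyadicI_succ_two_mul_add_one_iff]

lemma haar_eq_zero_of_notMem {l k : ℕ} {x : ℝ} (hx : x ∉ dyadicI l k) : haar l k x = 0 := by
  rw [dyadicI_eq_union, Set.mem_union, not_or] at hx
  rw [haar_eq, Set.indicator_of_notMem hx.1, Set.indicator_of_notMem hx.2, sub_zero, mul_zero]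

lemma setIntegral_mul_haar {f : ℝ → ℝ} {s : Set ℝ} {l k : ℕ} (hs : dyadicI l k ⊆ s)
    (hf : IntegrableOn f (dyadicI l k)) :
    ∫ t in s, f t * haar l k t =
      2 ^ ((l : ℝ) / 2) *
        ((∫ t in dyadicI (l + 1) (2 * k + 1), f t) - ∫ t in dyadicI (l + 1) (2 * k), f t) := by
  rw [dyadicI_eq_union] at hs hf
  have hL := hf.mono_set Set.subset_union_left
  have hR := hf.mono_set Set.subset_union_right
  have hmul : ∀ (u : Set ℝ) t, f t * u.indicator 1 t = u.indicator f t := by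
    intro u t
    by_cases ht : t ∈ u <;> simp [ht]
  have hpt : ∀ t, f t * haar l k t = 2 ^ ((l : ℝ) / 2) *
      ((dyadicI (l + 1) (2 * k + 1)).indicator f t - (dyadicI (l + 1) (2 * k)).indicator f t) := by
    intro t
    simp only [haar_eq, mul_left_comm (f t), mul_sub, hmul]
  simp only [hpt]
  rw [integral_const_mul,
    integral_sub (hR.integrable_indicator (measurableSet_dyadicI _ _)).restrict
      (hL.integrable_indicator (measurableSet_dyadicI _ _)).restrict,
    setIntegral_indicator (measurableSet_dyadicI _ _),
    setIntegral_indicator (measurableSet_dyadicI _ _),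
    Set.inter_eq_self_of_subset_right (Set.union_subset_iff.mp hs).1,
    Set.inter_eq_self_of_subset_right (Set.union_subset_iff.mp hs).2]

noncomputable def dyadicAverage (f : ℝ → ℝ) (l : ℕ) (x : ℝ) : ℝ :=
  2 ^ l * ∫ t in dyadicI l ⌊(2 : ℝ) ^ l * x⌋₊, f t

lemma sum_mul_haar_eq_of_mem_dyadicI (g : ℕ → ℝ) {l k : ℕ} {x : ℝ} (hk : k < 2 ^ l)
    (hx : x ∈ dyadicI l k) :
    ∑ k' ∈ Finset.range (2 ^ l), g k' * haar l k' x = g k * haar l k x := by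
  refine Finset.sum_eq_single_of_mem k (Finset.mem_range.mpr hk) fun k' _ hk' => ?_
  have hx' : x ∉ dyadicI l k' := fun h => hk' ((floor_eq_of_mem_dyadicI h).symm.trans
    (floor_eq_of_mem_dyadicI hx))
  rw [haar_eq_zero_of_notMem hx', mul_zero]

lemma dyadicAverage_succ {f : ℝ → ℝ} (hf : IntegrableOn f (Set.Ico (0 : ℝ) 1)) (l : ℕ) {x : ℝ}
    (hx : x ∈ Set.Ico (0 : ℝ) 1) :
    dyadicAverage f (l + 1) x = dyadicAverage f l x +
      ∑ k ∈ Finset.range (2 ^ l), (∫ t in Set.Ico (0 : ℝ) 1, f t * haar l k t) * haar l k x := by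
  set k := ⌊(2 : ℝ) ^ l * x⌋₊ with hk_def
  have hk : k < 2 ^ l := floor_lt_two_pow l hx
  have hxk : x ∈ dyadicI l k := mem_dyadicI_floor l hx.1
  have hfk : IntegrableOn f (dyadicI l k) := hf.mono_set (dyadicI_subset_Ico hk)
  rw [sum_mul_haar_eq_of_mem_dyadicI _ hk hxk,
    setIntegral_mul_haar (dyadicI_subset_Ico hk) hfk, haar_eq]
  rw [dyadicI_eq_union] at hxk hfk
  have hsplit : ∫ t in dyadicI l k, f t =
      (∫ t in dyadicI (l + 1) (2 * k), f t) + ∫ t in dyadicI (l + 1) (2 * k + 1), f t := by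
    rw [dyadicI_eq_union]
    exact setIntegral_union (disjoint_dyadicI_succ l k) (measurableSet_dyadicI _ _)
      (hfk.mono_set Set.subset_union_left) (hfk.mono_set Set.subset_union_right)
  have hsq := two_rpow_half_mul_self l
  simp only [dyadicAverage, ← hk_def, hsplit]
  rcases hxk with hL | hR
  · have hR : x ∉ dyadicI (l + 1) (2 * k + 1) := (disjoint_dyadicI_succ l k).notMem_of_mem_left hL
    rw [floor_eq_of_mem_dyadicI hL, Set.indicator_of_mem hL, Set.indicator_of_notMem hR,
      Pi.one_apply]
    linear_combination ((∫ t in dyadicI (l + 1) (2 * k + 1), f t) -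
      ∫ t in dyadicI (l + 1) (2 * k), f t) * hsq
  · have hL : x ∉ dyadicI (l + 1) (2 * k) := (disjoint_dyadicI_succ l k).notMem_of_mem_right hR
    rw [floor_eq_of_mem_dyadicI hR, Set.indicator_of_mem hR, Set.indicator_of_notMem hL,
      Pi.one_apply]
    linear_combination ((∫ t in dyadicI (l + 1) (2 * k), f t) -
      ∫ t in dyadicI (l + 1) (2 * k + 1), f t) * hsq

/-- For `f` Lebesgue integrable on `[0,1)`, every `j ∈ ℕ` and `x ∈ [0,1)`,
the Haar partial sum up to level `j` equals the level-`j` dyadic average: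
`∫₀¹ f + Σ_{l<j} Σ_{k<2^l} (∫₀¹ f ψ_{l,k}) ψ_{l,k}(x) = 2^j ∫_{I_{j,⌊2^j x⌋}} f`. -/
theorem stmt_5 (f : ℝ → ℝ) (hf : IntegrableOn f (Set.Ico (0 : ℝ) 1))
    (j : ℕ) (x : ℝ) (hx : x ∈ Set.Ico (0 : ℝ) 1) :
    (∫ t in Set.Ico (0 : ℝ) 1, f t) +
      ∑ l ∈ Finset.range j, ∑ k ∈ Finset.range (2 ^ l),
        (∫ t in Set.Ico (0 : ℝ) 1, f t * haar l k t) * haar l k x =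
      2 ^ j * ∫ t in dyadicI j ⌊2 ^ j * x⌋₊, f t := by
  change _ = dyadicAverage f j x
  induction j with
  | zero => simp [dyadicAverage, Nat.floor_eq_zero.mpr hx.2, dyadicI]
  | succ j ih => rw [Finset.sum_range_succ, ← add_assoc, ih, dyadicAverage_succ hf j hx]
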